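/- arXiv:2605.26903 — 4 statements merged into one kernel-verified Lean document; each statement's English description precedes it below -/
import Mathlib

section
/- Let Q be a positive integer, N ≥ 1 a natural number, and let a, s ∈ (ZMod Q)[X] be polynomials of degree < N. Then for every index i < N, the i-th coefficient of the remainder of a·s upon division by the monic polynomial X^N + 1 is given by the negacyclic convolution formula: ((a·s) %ₘ (X^N + 1)).coeff i = Σ_{k=0}^{i} a.coeff(i−k)·s.coeff(k) − Σ_{k=i+1}^{N−1} a.coeff(N+i−k)·s.coeff(k). -/
/-!
If `p` has degree `< 2N`, write `p = low + X^N * high` with `low`, `high` of degree `< N`.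
Then `p = (X^N + 1) * high + (low - high)`, so `low - high` is the remainder and its `i`-th
coefficient is `p_i - p_{N+i}`. For `p = a * s` with `a`, `s` of degree `< N`, the coefficient
`p_{N+i}` only collects the products `a_{N+i-k} s_k` with `i < k < N`.
-/

open Polynomial Finset

namespace Polynomial

variable {R : Type*}

section Semiring

variable [Semiring R]

theorem coeff_sum_range_monomial (f : ℕ → R) (N m : ℕ) :
    (∑ j ∈ range N, monomial j (f j)).coeff m = if m < N then f m else 0 := by
  simp [coeff_monomial]

theorem degree_sum_range_monomial_lt (f : ℕ → R) (N : ℕ) :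
    (∑ j ∈ range N, monomial j (f j)).degree < N := by
  rw [degree_lt_iff_coeff_zero]
  intro m hm
  rw [coeff_sum_range_monomial, if_neg (by exact_mod_cast hm.not_gt)]

theorem coeff_mul_eq_sum_range (a s : R[X]) (n : ℕ) :
    (a * s).coeff n = ∑ k ∈ range (n + 1), a.coeff (n - k) * s.coeff k := by
  rw [coeff_mul, ← Finset.Nat.sum_antidiagonal_swap]
  exact Finset.Nat.sum_antidiagonal_eq_sum_range_succ (fun k l => a.coeff l * s.coeff k) n

theorem degree_mul_lt_add {a s : R[X]} {m n : ℕ} (ha : a.degree < m) (hs : s.degree < n) :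
    (a * s).degree < ↑(m + n) := by
  rw [degree_lt_iff_coeff_zero]
  intro k hk
  rw [coeff_mul]
  refine sum_eq_zero fun x hx => ?_
  rw [HasAntidiagonal.mem_antidiagonal] at hx
  rcases le_or_gt m x.1 with h | h
  · rw [coeff_eq_zero_of_degree_lt (ha.trans_le (by exact_mod_cast h)), zero_mul]
  · rw [coeff_eq_zero_of_degree_lt (hs.trans_le (by exact_mod_cast (by omega : n ≤ x.2))), mul_zero]

theorem coeff_mul_add_eq_sum_Ico {a s : R[X]} {N : ℕ} (ha : a.degree < N) (hs : s.degree < N)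
    (i : ℕ) : (a * s).coeff (N + i) = ∑ k ∈ Ico (i + 1) N, a.coeff (N + i - k) * s.coeff k := by
  rw [coeff_mul_eq_sum_range]
  symm
  refine sum_subset (fun k hk => by simp only [mem_Ico, mem_range] at *; omega) fun k hk hk' => ?_
  simp only [mem_Ico, mem_range, not_and_or, not_le, not_lt] at hk hk'
  rcases hk' with hk' | hk'
  · rw [coeff_eq_zero_of_degree_lt (ha.trans_le (by exact_mod_cast (by omega : N ≤ N + i - k))),
      zero_mul]
  · rw [coeff_eq_zero_of_degree_lt (hs.trans_le (by exact_mod_cast hk')), mul_zero]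

end Semiring

section Ring

variable [Ring R]

theorem coeff_modByMonic_X_pow_add_one {p : R[X]} {N i : ℕ} (hp : p.degree < ↑(N + N))
    (hi : i < N) : (p %ₘ (X ^ N + 1)).coeff i = p.coeff i - p.coeff (N + i) := by
  nontriviality R
  set q := ∑ j ∈ range N, monomial j (p.coeff (N + j)) with hq
  set r := ∑ j ∈ range N, monomial j (p.coeff j - p.coeff (N + j)) with hr
  have hmonic : (X ^ N + 1 : R[X]).Monic :=
    monic_X_pow_add (degree_one_le.trans_lt (by exact_mod_cast (Nat.zero_le i).trans_lt hi))
  have hdiv : r + (X ^ N + 1) * q = p := by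
    ext m
    simp only [hq, hr, coeff_add, add_mul, one_mul, X_pow_mul, coeff_mul_X_pow',
      coeff_sum_range_monomial]
    split_ifs <;> try omega
    · abel
    · rw [Nat.add_sub_cancel' ‹N ≤ m›, zero_add, add_zero]
    · rw [coeff_eq_zero_of_degree_lt (hp.trans_le (by exact_mod_cast (by omega : N + N ≤ m)))]
      abel
  have hdeg : r.degree < (X ^ N + 1 : R[X]).degree := by
    rw [← C_1, degree_X_pow_add_C ((Nat.zero_le i).trans_lt hi)]
    exact degree_sum_range_monomial_lt _ N
  rw [(div_modByMonic_unique q r hmonic ⟨hdiv, hdeg⟩).2, coeff_sum_range_monomial, if_pos hi]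

end Ring

end Polynomial

theorem negacyclic_convolution_coeff_general (Q : ℕ) (N : ℕ)
    (a s : Polynomial (ZMod Q))
    (ha : a.degree < (N : WithBot ℕ)) (hs : s.degree < (N : WithBot ℕ)) :
    ∀ i < N,
      ((a * s) %ₘ (X ^ N + 1)).coeff i
        = (∑ k ∈ range (i + 1), a.coeff (i - k) * s.coeff k)
          - ∑ k ∈ Ico (i + 1) N, a.coeff (N + i - k) * s.coeff k := by
  intro i hi
  rw [coeff_modByMonic_X_pow_add_one (degree_mul_lt_add ha hs) hi, coeff_mul_eq_sum_range,
    coeff_mul_add_eq_sum_Ico ha hs]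

/-- Negacyclic convolution: for polynomials `a, s` over `ZMod Q` of degree `< N`, the
`i`-th coefficient (`i < N`) of `a·s` reduced modulo the monic polynomial `X^N + 1` is
`∑_{k=0}^{i} a_{i−k}·s_k − ∑_{k=i+1}^{N−1} a_{N+i−k}·s_k`. -/
theorem negacyclic_convolution_coeff (Q : ℕ) (hQ : 0 < Q) (N : ℕ) (hN : 1 ≤ N)
    (a s : Polynomial (ZMod Q))
    (ha : a.degree < (N : WithBot ℕ)) (hs : s.degree < (N : WithBot ℕ)) :
    ∀ i < N,
      ((a * s) %ₘ (X ^ N + 1)).coeff i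
        = (∑ k ∈ range (i + 1), a.coeff (i - k) * s.coeff k)
          - ∑ k ∈ Ico (i + 1) N, a.coeff (N + i - k) * s.coeff k :=
  negacyclic_convolution_coeff_general Q N a s ha hs
end

section
/- Let Q be a positive integer and N an even natural number with N ≥ 2; write N̲ = N/2. Let s : Fin N̲ → ZMod Q be an LWE secret and let (a₁, b₁) and (a₂, b₂) be two LWE ciphertexts with a₁, a₂ : Fin N̲ → ZMod Q, messages m₁, m₂ ∈ ZMod Q and noises e₁, e₂ ∈ ZMod Q, i.e., bᵢ = Σ_{k<N̲} aᵢ(k)·s(k) + eᵢ + mᵢ for i = 1, 2. Define in (ZMod Q)[X] the polynomials â = Σ_{k<N̲} a₁(k)·X^k + Σ_{k<N̲} a₂(k)·X^{N/2+k}, b̂ = C(b₁) + C(b₂)·X^{N/2}, and the modified secret ŝ = C(s(0)) − Σ_{k=1}^{N̲−1} s(k)·X^{N−k}. Then the remainder of b̂ − â·ŝ upon division by X^N + 1 has constant coefficient equal to m₁ + e₁ and coefficient at index N/2 equal to m₂ + e₂. That is, decrypting the packed pair (â, b̂) under ŝ recovers the two LWE messages (up to their noises) at coefficients 0 and N/2,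 without lifting the LWE dimension. -/
open Polynomial Finset

/-! Modulo `X^N + 1` we have `X^N = -1`, so `ŝ ≡ ∑ₖ s k X^(-k)` and the coefficient of `X^i` in
`â ŝ` is `∑ₖ â_{i+k} s k`: the inner product of `s` with the window of coefficients of `â` that
starts at `i`. The windows at `0` and `N/2` are `a₁` and `a₂`, so decryption at these positions
leaves `bᵢ - ⟨aᵢ, s⟩ = mᵢ + eᵢ`. Everything has degree below `2N`, where reduction modulo
`X^N + 1` just subtracts the coefficient at `N + i` from the one at `i`. -/

section Negacyclic

variable {R : Type*} [CommRing R] {N n : ℕ}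

theorem coeff_modByMonic_X_pow_add_one {f : R[X]} (hf : f.natDegree < 2 * N) {i : ℕ}
    (hi : i < N) : (f %ₘ (X ^ N + 1)).coeff i = f.coeff i - f.coeff (N + i) := by
  nontriviality R
  have hm : (X ^ N + 1 : R[X]).Monic :=
    monic_X_pow_add (degree_one_le.trans_lt (by exact_mod_cast (by omega : 0 < N)))
  set q := f /ₘ (X ^ N + 1)
  set r := f %ₘ (X ^ N + 1)
  have hf_eq : r + X ^ N * q + q = f := by
    rw [← modByMonic_add_div f (X ^ N + 1)]; ring
  have hr : r.coeff (N + i) = 0 := by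
    refine coeff_eq_zero_of_degree_lt ((degree_modByMonic_lt f hm).trans_le ?_)
    rw [← C_1, degree_X_pow_add_C (by omega)]
    exact_mod_cast Nat.le_add_right N i
  have hq : q.coeff (N + i) = 0 := by
    refine coeff_eq_zero_of_natDegree_lt ?_
    rw [natDegree_divByMonic f hm, ← C_1, natDegree_X_pow_add_C]
    omega
  rw [← hf_eq]
  simp only [coeff_add, coeff_X_pow_mul', hr, hq, if_neg (Nat.not_le.mpr hi),
    if_pos (Nat.le_add_right N i), Nat.add_sub_cancel_left]
  ring

lemma coeff_sum_C_mul_X_pow_add (d : ℕ) (a : Fin n → R) (j : Fin n) :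
    (∑ k : Fin n, C (a k) * X ^ (d + (k : ℕ))).coeff (d + j) = a j := by
  simp [finsetSum_coeff, Fin.val_inj]

lemma coeff_sum_C_mul_X_pow_add_of_lt (a : Fin n → R) {d m : ℕ} (hm : m < d) :
    (∑ k : Fin n, C (a k) * X ^ (d + (k : ℕ))).coeff m = 0 := by
  simp only [finsetSum_coeff, coeff_C_mul_X_pow]
  exact sum_eq_zero fun k _ => if_neg (by omega)

lemma natDegree_sum_C_mul_X_pow_add_lt (hn : 0 < n) (d : ℕ) (a : Fin n → R) :
    (∑ k : Fin n, C (a k) * X ^ (d + (k : ℕ))).natDegree < d + n := by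
  refine (natDegree_sum_le_of_forall_le _ _ (n := d + n - 1) fun k _ => ?_).trans_lt (by omega)
  exact (natDegree_C_mul_X_pow_le _ _).trans (by omega)

lemma sum_eq_add_sum_filter_val_ne_zero (hn : 0 < n) (f : Fin n → R) :
    ∑ k, f k = f ⟨0, hn⟩ + ∑ k ∈ univ.filter (fun k : Fin n => (k : ℕ) ≠ 0), f k := by
  rw [← add_sum_erase univ f (mem_univ _)]
  congr 2
  ext k
  simp [Fin.ext_iff]

/-- The modified secret `ŝ`: modulo `X^N + 1` it is `∑ₖ s k • X^(-k)`, as `-X^(N-k) ≡ X^(-k)`. -/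
noncomputable def twistedSecret (hn : 0 < n) (s : Fin n → R) (N : ℕ) : R[X] :=
  C (s ⟨0, hn⟩) - ∑ k ∈ univ.filter (fun k : Fin n => (k : ℕ) ≠ 0), C (s k) * X ^ (N - (k : ℕ))

variable (hn : 0 < n) (s : Fin n → R)

lemma natDegree_twistedSecret_lt (hnN : n ≤ N) : (twistedSecret hn s N).natDegree < N := by
  refine (natDegree_sub_le _ _).trans_lt (max_lt (by simp; omega) ?_)
  refine (natDegree_sum_le_of_forall_le _ _ (n := N - 1) fun k hk => ?_).trans_lt (by omega)
  have := (mem_filter.mp hk).2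
  exact (natDegree_C_mul_X_pow_le _ _).trans (by omega)

lemma coeff_mul_twistedSecret (A : R[X]) (j : ℕ) :
    (A * twistedSecret hn s N).coeff j = A.coeff j * s ⟨0, hn⟩ -
      ∑ k ∈ univ.filter (fun k : Fin n => (k : ℕ) ≠ 0),
        if N - (k : ℕ) ≤ j then A.coeff (j - (N - k)) * s k else 0 := by
  simp only [twistedSecret, mul_sub, coeff_sub, coeff_mul_C, mul_sum, finsetSum_coeff,
    ← mul_assoc, coeff_mul_X_pow']

lemma coeff_mul_twistedSecret_of_add_le (A : R[X]) {j : ℕ} (hj : j + n ≤ N) :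
    (A * twistedSecret hn s N).coeff j = A.coeff j * s ⟨0, hn⟩ := by
  rw [coeff_mul_twistedSecret, sub_eq_self]
  exact sum_eq_zero fun k _ => if_neg (by omega)

lemma coeff_add_mul_twistedSecret_of_natDegree_lt {A : R[X]} (hA : A.natDegree < N)
    (hnN : n ≤ N) (i : ℕ) :
    (A * twistedSecret hn s N).coeff (N + i) =
      -∑ k ∈ univ.filter (fun k : Fin n => (k : ℕ) ≠ 0), A.coeff (i + k) * s k := by
  rw [coeff_mul_twistedSecret, coeff_eq_zero_of_natDegree_lt (by omega), zero_mul, zero_sub]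
  refine congrArg _ (sum_congr rfl fun k _ => ?_)
  rw [if_pos (by omega), show N + i - (N - k) = i + k by omega]

theorem coeff_sub_mul_twistedSecret_modByMonic {A B : R[X]} (hA : A.natDegree < N)
    (hB : B.natDegree < N) {i : ℕ} (hi : i + n ≤ N) :
    ((B - A * twistedSecret hn s N) %ₘ (X ^ N + 1)).coeff i =
      B.coeff i - ∑ k : Fin n, A.coeff (i + k) * s k := by
  have hdeg : (B - A * twistedSecret hn s N).natDegree < 2 * N := by
    have := natDegree_twistedSecret_lt hn s (N := N) (by omega)
    exact (natDegree_sub_le _ _).trans_lt (max_lt (by omega) (natDegree_mul_le.trans_lt (by omega)))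
  rw [coeff_modByMonic_X_pow_add_one hdeg (by omega), coeff_sub, coeff_sub,
    coeff_eq_zero_of_natDegree_lt (n := N + i) (by omega),
    coeff_mul_twistedSecret_of_add_le hn s A hi,
    coeff_add_mul_twistedSecret_of_natDegree_lt hn s hA (by omega),
    sum_eq_add_sum_filter_val_ne_zero hn, add_zero]
  ring

end Negacyclic

/-- Correctness of FastPackLWEs: given two LWE ciphertexts `(a₁, b₁)`, `(a₂, b₂)` of
dimension `N/2` under secret `s`, with `bᵢ = ⟨aᵢ, s⟩ + eᵢ + mᵢ`, the packed pair
`(â, b̂)` with `â = Σ a₁(k)X^k + Σ a₂(k)X^{N/2+k}`, `b̂ = C b₁ + C b₂ · X^{N/2}`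
decrypts under the modified secret `ŝ = C(s 0) − Σ_{k=1}^{N/2−1} s(k)·X^{N−k}`: the
reduction of `b̂ − â·ŝ` modulo `X^N + 1` has constant coefficient `m₁ + e₁` and
coefficient at `N/2` equal to `m₂ + e₂`. -/
theorem fastpack_correctness (Q : ℕ) (N : ℕ) (hN : 2 ≤ N)
    (s a₁ a₂ : Fin (N / 2) → ZMod Q) (m₁ m₂ e₁ e₂ b₁ b₂ : ZMod Q)
    (hb₁ : b₁ = (∑ k : Fin (N / 2), a₁ k * s k) + e₁ + m₁)
    (hb₂ : b₂ = (∑ k : Fin (N / 2), a₂ k * s k) + e₂ + m₂) :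
    let ahat : Polynomial (ZMod Q) :=
      (∑ k : Fin (N / 2), C (a₁ k) * X ^ (k : ℕ))
        + ∑ k : Fin (N / 2), C (a₂ k) * X ^ (N / 2 + (k : ℕ))
    let bhat : Polynomial (ZMod Q) := C b₁ + C b₂ * X ^ (N / 2)
    let shat : Polynomial (ZMod Q) :=
      C (s ⟨0, by omega⟩)
        - ∑ k ∈ univ.filter (fun k : Fin (N / 2) => (k : ℕ) ≠ 0),
            C (s k) * X ^ (N - (k : ℕ))
    ((bhat - ahat * shat) %ₘ (X ^ N + 1)).coeff 0 = m₁ + e₁ ∧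
    ((bhat - ahat * shat) %ₘ (X ^ N + 1)).coeff (N / 2) = m₂ + e₂ := by
  intro ahat bhat shat
  have hM : 0 < N / 2 := by omega
  have hlow : ∑ k : Fin (N / 2), C (a₁ k) * X ^ (k : ℕ) =
      ∑ k : Fin (N / 2), C (a₁ k) * X ^ (0 + (k : ℕ)) := by simp only [zero_add]
  have hdeg₁ := natDegree_sum_C_mul_X_pow_add_lt hM 0 a₁
  have hdeg₂ := natDegree_sum_C_mul_X_pow_add_lt hM (N / 2) a₂
  have hahat₁ (k : Fin (N / 2)) : ahat.coeff (0 + k) = a₁ k := by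
    rw [coeff_add, hlow, coeff_sum_C_mul_X_pow_add, coeff_sum_C_mul_X_pow_add_of_lt _ (by omega),
      add_zero]
  have hahat₂ (k : Fin (N / 2)) : ahat.coeff (N / 2 + k) = a₂ k := by
    rw [coeff_add, hlow, coeff_sum_C_mul_X_pow_add, coeff_eq_zero_of_natDegree_lt (by omega),
      zero_add]
  have hahat : ahat.natDegree < N :=
    (natDegree_add_le _ _).trans_lt (max_lt (hlow ▸ by omega) (by omega))
  have hbhat : bhat.natDegree < N :=
    (natDegree_add_le _ _).trans_lt
      (max_lt (by simp; omega) ((natDegree_C_mul_X_pow_le _ _).trans_lt (by omega)))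
  rw [show shat = twistedSecret hM s N from rfl]
  constructor
  · rw [coeff_sub_mul_twistedSecret_modByMonic hM s hahat hbhat (i := 0) (by omega)]
    simp only [hahat₁, bhat, coeff_add, coeff_C_zero, coeff_C_mul_X_pow, if_neg hM.ne, hb₁]
    ring
  · rw [coeff_sub_mul_twistedSecret_modByMonic hM s hahat hbhat (i := N / 2) (by omega)]
    simp only [hahat₂, bhat, coeff_add, coeff_C, coeff_C_mul_X_pow, if_neg hM.ne', if_true, hb₂]
    ring
end

section
/- Let Q be a positive integer and let N, t be positive natural numbers with 2t dividing N. In the quotient ring R = (ZMod Q)[X]/(X^N + 1), let x denote the image of X. Then (x^{N/t + 1})^N = −1; consequently X ↦ X^{N/t+1} induces a ring endomorphism φ of R fixing the constants, with φ(x) = x^{N/t+1}. Moreover, for every natural number j, φ(x^{2tj}) = x^{2tj} and φ(x^{t + 2tj}) = −x^{t+2tj}; that is, φ fixes all monomials whose exponent is an even multiple of t and negates all monomials whose exponent is an odd multiple of t. -/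
/-!
Write `N = t k` with `k = N / t` even. Since `x ^ N = -1`, the element `y = x ^ (k + 1)` satisfies
`y ^ N = (x ^ N) ^ (k + 1) = -1`, so it is again a root of `X ^ N + 1` and `X ↦ y` descends to the
quotient. On monomials, `y ^ (t s) = x ^ (t s) * (x ^ N) ^ s = (-1) ^ s * x ^ (t s)`.
-/

open Polynomial

section NegOnePow

variable {M : Type*} [Monoid M] [HasDistribNeg M] {x : M}

theorem pow_add_one_pow_of_pow_eq_neg_one {n k : ℕ} (hx : x ^ n = -1) (hk : Even k) :
    (x ^ (k + 1)) ^ n = -1 := by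
  rw [pow_right_comm, hx, hk.add_one.neg_one_pow]

theorem pow_add_one_pow_mul_of_pow_mul_eq_neg_one {t k : ℕ} (hx : x ^ (t * k) = -1) (s : ℕ) :
    (x ^ (k + 1)) ^ (t * s) = (-1) ^ s * x ^ (t * s) := by
  rw [← pow_mul, show (k + 1) * (t * s) = t * k * s + t * s by ring, pow_add, pow_mul, hx]

end NegOnePow

theorem AdjoinRoot.root_pow_eq_neg_one {R : Type*} [CommRing R] (n : ℕ) :
    root (X ^ n + 1 : R[X]) ^ n = -1 := by
  have h := eval₂_root (X ^ n + 1 : R[X])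
  rw [eval₂_add, eval₂_X_pow, eval₂_one] at h
  exact eq_neg_of_add_eq_zero_left h

theorem evalAuto_negacyclic_general (Q : ℕ) (N t : ℕ) (hdvd : 2 * t ∣ N) :
    let I : Ideal (Polynomial (ZMod Q)) := Ideal.span {X ^ N + 1}
    let x : Polynomial (ZMod Q) ⧸ I := Ideal.Quotient.mk I X
    (x ^ (N / t + 1)) ^ N = -1 ∧
    ∃ φ : (Polynomial (ZMod Q) ⧸ I) →ₐ[ZMod Q] (Polynomial (ZMod Q) ⧸ I),
      φ x = x ^ (N / t + 1) ∧
      ∀ j : ℕ,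
        φ (x ^ (2 * t * j)) = x ^ (2 * t * j) ∧
        φ (x ^ (t + 2 * t * j)) = -(x ^ (t + 2 * t * j)) := by
  intro I x
  have hxN : x ^ N = -1 := AdjoinRoot.root_pow_eq_neg_one N
  have hk : Even (N / t) := even_iff_two_dvd.mpr (Nat.dvd_div_of_mul_dvd (by rwa [mul_comm]))
  have hroot : (x ^ (N / t + 1)) ^ N = -1 :=
    pow_add_one_pow_of_pow_eq_neg_one (M := (ZMod Q)[X] ⧸ I) hxN hk
  have hsign := pow_add_one_pow_mul_of_pow_mul_eq_neg_one (M := (ZMod Q)[X] ⧸ I)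
    (by rwa [Nat.mul_div_cancel' (dvd_of_mul_left_dvd hdvd)] : x ^ (t * (N / t)) = -1)
  let φ : (ZMod Q)[X] ⧸ I →ₐ[ZMod Q] _ :=
    Ideal.Quotient.liftₐ I (aeval (x ^ (N / t + 1))) fun a ha => by
      obtain ⟨c, rfl⟩ := Ideal.mem_span_singleton'.mp ha
      simp [hroot]
  have hφx : φ x = x ^ (N / t + 1) := aeval_X _
  refine ⟨hroot, φ, hφx, fun j => ⟨?_, ?_⟩⟩
  · rw [map_pow, hφx, show 2 * t * j = t * (2 * j) by ring, hsign,
      (even_two_mul j).neg_one_pow, one_mul]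
  · rw [map_pow, hφx, show t + 2 * t * j = t * (2 * j + 1) by ring, hsign,
      (odd_two_mul_add_one j).neg_one_pow, neg_one_mul]

/-- In `R = (ZMod Q)[X]/(X^N + 1)` with `x` the image of `X` and `2t ∣ N`, we have
`(x^{N/t+1})^N = −1`; consequently there is a ring endomorphism `φ` of `R` fixing the
constants (an `ZMod Q`-algebra endomorphism) with `φ(x) = x^{N/t+1}`, and `φ` fixes all
monomials `x^{2tj}` and negates all monomials `x^{t+2tj}`. -/
theorem evalAuto_negacyclic (Q : ℕ) (hQ : 0 < Q) (N t : ℕ)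
    (hN : 0 < N) (ht : 0 < t) (hdvd : 2 * t ∣ N) :
    let I : Ideal (Polynomial (ZMod Q)) := Ideal.span {X ^ N + 1}
    let x : Polynomial (ZMod Q) ⧸ I := Ideal.Quotient.mk I X
    (x ^ (N / t + 1)) ^ N = -1 ∧
    ∃ φ : (Polynomial (ZMod Q) ⧸ I) →ₐ[ZMod Q] (Polynomial (ZMod Q) ⧸ I),
      φ x = x ^ (N / t + 1) ∧
      ∀ j : ℕ,
        φ (x ^ (2 * t * j)) = x ^ (2 * t * j) ∧
        φ (x ^ (t + 2 * t * j)) = -(x ^ (t + 2 * t * j)) :=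
  evalAuto_negacyclic_general Q N t hdvd
end

section
/- Let Q be a positive integer and let N, t be positive natural numbers with 2t dividing N. In the quotient ring R = (ZMod Q)[X]/(X^N + 1) with x the image of X, let φ be the ring endomorphism of R with φ(x) = x^{N/t+1} that fixes the constants. Let p, q ∈ (ZMod Q)[X] be polynomials all of whose nonzero coefficients occur at exponents divisible by 2t, and write p̄, q̄ for their images in R. Then (p̄ + x^t·q̄) + φ(p̄ − x^t·q̄) = 2·(p̄ + x^t·q̄). That is, the merge step of PackRLWEs, adding the automorphism image of the difference to the sum, exactly doubles the interleaved message p̄ + x^t·q̄ when the two operands are supported on exponent multiples of 2t. -/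
open Polynomial

/-- Correctness of the PackRLWEs merge step: in `R = (ZMod Q)[X]/(X^N + 1)` with `x` the
image of `X` and `2t ∣ N`, let `φ` be the algebra endomorphism of `R` (hence a ring
endomorphism fixing the constants) with `φ(x) = x^{N/t+1}`. If all nonzero coefficients of
`p` and `q` occur at exponents divisible by `2t`, then
`(p̄ + x^t·q̄) + φ(p̄ − x^t·q̄) = 2·(p̄ + x^t·q̄)`. -/
theorem packRLWEs_merge (Q : ℕ) (hQ : 0 < Q) (N t : ℕ)
    (hN : 0 < N) (ht : 0 < t) (hdvd : 2 * t ∣ N)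
    (p q : Polynomial (ZMod Q))
    (hp : ∀ i, p.coeff i ≠ 0 → 2 * t ∣ i)
    (hq : ∀ i, q.coeff i ≠ 0 → 2 * t ∣ i) :
    let I : Ideal (Polynomial (ZMod Q)) := Ideal.span {X ^ N + 1}
    let x : Polynomial (ZMod Q) ⧸ I := Ideal.Quotient.mk I X
    let pbar : Polynomial (ZMod Q) ⧸ I := Ideal.Quotient.mk I p
    let qbar : Polynomial (ZMod Q) ⧸ I := Ideal.Quotient.mk I q
    ∀ φ : (Polynomial (ZMod Q) ⧸ I) →ₐ[ZMod Q] (Polynomial (ZMod Q) ⧸ I),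
      φ x = x ^ (N / t + 1) →
      (pbar + x ^ t * qbar) + φ (pbar - x ^ t * qbar)
        = 2 * (pbar + x ^ t * qbar) := by

  intro I x pbar qbar φ hφ
  have htN : t ∣ N := (dvd_mul_left t 2).trans hdvd
  have hmem : (X ^ N + 1 : Polynomial (ZMod Q)) ∈ I := Ideal.subset_span rfl
  have hxN : x ^ N = -1 := by
    have h0 : (Ideal.Quotient.mk I) (X ^ N + 1) = 0 :=
      Ideal.Quotient.eq_zero_iff_mem.mpr hmem
    have : x ^ N + 1 = 0 := by simpa [map_add, map_pow] using h0
    linear_combination this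
  have hx2N : x ^ (2 * N) = 1 := by
    rw [two_mul, pow_add, hxN]; ring
  have hkey : ∀ i : ℕ, 2 * t ∣ i → (x ^ (N / t + 1)) ^ i = x ^ i := by
    rintro i ⟨k, rfl⟩
    obtain ⟨m, rfl⟩ := htN
    rw [Nat.mul_div_cancel_left m ht, ← pow_mul]
    have h : (m + 1) * (2 * t * k) = 2 * (t * m) * k + 2 * t * k := by ring
    rw [h, pow_add, pow_mul, hx2N, one_pow, one_mul]
  have hfix : ∀ r : Polynomial (ZMod Q), (∀ i, r.coeff i ≠ 0 → 2 * t ∣ i) →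
      φ (Ideal.Quotient.mk I r) = Ideal.Quotient.mk I r := by
    intro r hr
    conv_lhs => rw [r.as_sum_support]
    conv_rhs => rw [r.as_sum_support]
    rw [map_sum, map_sum]
    refine Finset.sum_congr rfl fun i hi => ?_
    rw [← C_mul_X_pow_eq_monomial, map_mul, map_mul, map_pow]
    have hC : (Ideal.Quotient.mk I) (C (r.coeff i))
        = algebraMap (ZMod Q) (Polynomial (ZMod Q) ⧸ I) (r.coeff i) := rfl
    have e : x = Ideal.Quotient.mk I X := rfl
    rw [hC, φ.commutes, ← e, map_pow, hφ, hkey i (hr i (Polynomial.mem_support_iff.mp hi))]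
  have hφxt : φ (x ^ t) = - x ^ t := by
    obtain ⟨m, hm⟩ := htN
    rw [map_pow, hφ, ← pow_mul, hm, Nat.mul_div_cancel_left m ht]
    have h : (m + 1) * t = t * m + t := by ring
    rw [h, pow_add, ← hm, hxN]; ring
  rw [map_sub, map_mul, hfix p hp, hfix q hq, hφxt]
  ring
end
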